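/- arXiv:2312.07603 — 7 statements merged into one kernel-verified Lean document; each statement's English description precedes it below -/
import Mathlib

section
/- Let (r(1),𝒞(1)) and (r*,𝒞*) be equilibria, and let P be an alternating path r(1) → 𝒞(2) → r(3) → 𝒞(4) → ⋯ → r(l) → 𝒞* of length l that starts at the row strategy r(1) and ends at the column profile 𝒞*. Define the sequence of profiles Q by: Q₁ = (r(1),𝒞(1)); Q₂ = (r(1),𝒞(2)); for 3 ≤ t ≤ l, Q_t = (r(t), 𝒞(t−1)) when t is odd and Q_t = (r(t−1), 𝒞(t)) when t is even; Q_{l+1} = (r(l), 𝒞*); Q_{l+2} = (r*, 𝒞*). Then Q is a transformation path from (r(1),𝒞(1)) to (r*,𝒞*), its total cost equals exactly 2·Cost(P), and its length (number of steps) is l+1, one more than the length of P. -/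
open Finset

/-- Reward needed to incentivize the row player to play `i'` when the columns play `𝒞`. -/
noncomputable def Trow {m n k : ℕ} [NeZero m] (R : Fin m → Fin n → ℝ)
    (𝒞 : Fin k → Fin n) (i' : Fin m) : ℝ :=
  (univ.sup' univ_nonempty fun i => ∑ j, R i (𝒞 j)) - ∑ j, R i' (𝒞 j)

/-- Reward needed to incentivize the column players to play `𝒞'` when the row plays `i`. -/
noncomputable def Tcol {m n k : ℕ} [NeZero n] (C : Fin m → Fin n → ℝ)
    (i : Fin m) (𝒞' : Fin k → Fin n) : ℝ :=
  k * (univ.sup' univ_nonempty fun q => C i q) - ∑ j, C i (𝒞' j)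

/-- `(i, 𝒞)` is an equilibrium if `T_𝒞(i) = 0` and `T_i(𝒞) = 0`. -/
def IsEquilibrium {m n k : ℕ} [NeZero m] [NeZero n] (R C : Fin m → Fin n → ℝ)
    (i : Fin m) (𝒞 : Fin k → Fin n) : Prop :=
  Trow R 𝒞 i = 0 ∧ Tcol C i 𝒞 = 0

/-!
Prepend the edge `𝒞(1) → r(1)` and append the edge `𝒞* → r*` to the alternating path; both
have weight zero because their endpoints are equilibria. The profile sequence `Q` is then the
interleaving of the extended path, and the step `Q_t → Q_{t+1}` changes the row strategy along
one edge of the path and the column profile along the neighbouring edge, so it costs the sum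
of the weights of edges `t - 1` and `t`. Summing, every edge of the path is paid twice.
-/

theorem Finset.sum_Ico_pred_add_self {M : Type*} [AddCommMonoid M] (f : ℕ → M) (l : ℕ)
    (h₀ : f 0 = 0) (hl : f (l + 1) = 0) :
    ∑ t ∈ Ico 1 (l + 2), (f (t - 1) + f t) = 2 • ∑ t ∈ Ico 1 (l + 1), f t := by
  rw [sum_Ico_eq_sum_range, sum_Ico_eq_sum_range, show l + 2 - 1 = l + 1 by omega,
    add_tsub_cancel_right, sum_add_distrib, sum_range_succ', sum_range_succ]
  simp [h₀, hl, add_comm 1, two_nsmul]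

section AlternatingPath

variable {m n k : ℕ} [NeZero m] [NeZero n] (R C : Fin m → Fin n → ℝ)

/-- Weight of the `t`-th edge of the alternating path `r(1) → 𝒞(2) → r(3) → ⋯`. -/
noncomputable def alternatingWeight (r : ℕ → Fin m) (𝒞 : ℕ → Fin k → Fin n) (t : ℕ) : ℝ :=
  if Odd t then Tcol C (r t) (𝒞 (t + 1)) else Trow R (𝒞 t) (r (t + 1))

noncomputable def transformationStepCost (Q : ℕ → Fin m × (Fin k → Fin n)) (t : ℕ) : ℝ :=
  Tcol C (Q t).1 (Q (t + 1)).2 + Trow R (Q t).2 (Q (t + 1)).1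

/-- The profile sequence `(r(1), 𝒞(0)), (r(1), 𝒞(2)), (r(3), 𝒞(2)), (r(3), 𝒞(4)), …`. -/
def interleave {α β : Type*} (r : ℕ → α) (c : ℕ → β) (t : ℕ) : α × β :=
  if Even t then (r (t - 1), c t) else (r t, c (t - 1))

theorem transformationStepCost_interleave (r : ℕ → Fin m) (𝒞 : ℕ → Fin k → Fin n) {t : ℕ}
    (ht : 1 ≤ t) :
    transformationStepCost R C (interleave r 𝒞) t =
      alternatingWeight R C r 𝒞 (t - 1) + alternatingWeight R C r 𝒞 t := by
  obtain ⟨s, rfl⟩ := Nat.exists_eq_add_of_le' ht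
  rcases Nat.even_or_odd s with hs | hs
  · have hs1 : ¬ Even (s + 1) := by simpa [Nat.even_add_one] using hs
    simp [transformationStepCost, alternatingWeight, interleave, hs, hs1,
      Nat.not_odd_iff_even.mpr hs, add_comm]
  · have hs1 : Even (s + 1) := hs.add_one
    simp [transformationStepCost, alternatingWeight, interleave, hs, hs1, Nat.even_add_one]

theorem alternatingWeight_update (r : ℕ → Fin m) (𝒞 : ℕ → Fin k → Fin n) (a : Fin m)
    (c : Fin k → Fin n) {l t : ℕ} (ht : t ∈ Ico 1 (l + 1)) :
    alternatingWeight R C (Function.update r (l + 2) a) (Function.update 𝒞 0 c) t =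
      alternatingWeight R C r 𝒞 t := by
  obtain ⟨ht1, htl⟩ := mem_Ico.mp ht
  simp (disch := omega) [alternatingWeight, Function.update_of_ne]

theorem eq_interleave_update {α β : Type*} (l : ℕ) (hl : Odd l) (r : ℕ → α) (c : ℕ → β)
    (rstar : α) (cstar : β) (hend : c (l + 1) = cstar) (Q : ℕ → α × β)
    (hQ1 : Q 1 = (r 1, c 1))
    (hQ2 : Q 2 = (r 1, c 2))
    (hQodd : ∀ t, 3 ≤ t → t ≤ l → Odd t → Q t = (r t, c (t - 1)))
    (hQeven : ∀ t, 3 ≤ t → t ≤ l → Even t → Q t = (r (t - 1), c t))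
    (hQl1 : Q (l + 1) = (r l, cstar))
    (hQl2 : Q (l + 2) = (rstar, cstar)) {t : ℕ} (ht : t ∈ Icc 1 (l + 2)) :
    Q t = interleave (Function.update r (l + 2) rstar) (Function.update c 0 (c 1)) t := by
  obtain ⟨ht1, ht2⟩ := mem_Icc.mp ht
  have hl1 : 1 ≤ l := hl.pos
  unfold interleave
  rcases (show t = 1 ∨ t = 2 ∨ 3 ≤ t ∧ t ≤ l ∨ t = l + 1 ∨ t = l + 2 by omega)
    with rfl | rfl | ⟨h3, htl⟩ | rfl | rfl
  · simpa (disch := omega) [Function.update_of_ne] using hQ1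
  · simpa (disch := omega) [Function.update_of_ne] using hQ2
  · rcases Nat.even_or_odd t with he | ho
    · simpa (disch := omega) [he, Function.update_of_ne] using hQeven t h3 htl he
    · simpa (disch := omega) [Nat.not_even_iff_odd.mpr ho, Function.update_of_ne]
        using hQodd t h3 htl ho
  · simpa (disch := omega) [hl.add_one, Function.update_of_ne, hend] using hQl1
  · simpa (disch := omega) [Nat.not_even_iff_odd.mpr (hl.add_even even_two),
      Function.update_of_ne, hend] using hQl2

end AlternatingPath

theorem transformation_path_from_alternating_path_general
    (m n k : ℕ) [NeZero m] [NeZero n]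
    (R C : Fin m → Fin n → ℝ)
    (l : ℕ) (hl : Odd l)
    (r : ℕ → Fin m) (𝒞 : ℕ → Fin k → Fin n)
    (rstar : Fin m) (Cstar : Fin k → Fin n)
    (hinit : IsEquilibrium R C (r 1) (𝒞 1))
    (htarget : IsEquilibrium R C rstar Cstar)
    (hend : 𝒞 (l + 1) = Cstar)
    (costP : ℝ)
    (hcostP : costP = ∑ t ∈ Finset.Ico 1 (l + 1),
      if Odd t then Tcol C (r t) (𝒞 (t+1)) else Trow R (𝒞 t) (r (t+1)))
    (Q : ℕ → Fin m × (Fin k → Fin n))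
    (hQ1 : Q 1 = (r 1, 𝒞 1))
    (hQ2 : Q 2 = (r 1, 𝒞 2))
    (hQodd : ∀ t, 3 ≤ t → t ≤ l → Odd t → Q t = (r t, 𝒞 (t - 1)))
    (hQeven : ∀ t, 3 ≤ t → t ≤ l → Even t → Q t = (r (t - 1), 𝒞 t))
    (hQl1 : Q (l + 1) = (r l, Cstar))
    (hQl2 : Q (l + 2) = (rstar, Cstar)) :
    Q 1 = (r 1, 𝒞 1) ∧ Q (l + 2) = (rstar, Cstar) ∧
      (∑ t ∈ Finset.Ico 1 (l + 2),
        (Tcol C (Q t).1 (Q (t+1)).2 + Trow R (Q t).2 (Q (t+1)).1)) = 2 * costP := by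
  refine ⟨hQ1, hQl2, ?_⟩
  set r' := Function.update r (l + 2) rstar
  set 𝒞' := Function.update 𝒞 0 (𝒞 1)
  have hQ : ∀ t ∈ Icc 1 (l + 2), Q t = interleave r' 𝒞' t := fun t ht =>
    eq_interleave_update l hl r 𝒞 rstar Cstar hend Q hQ1 hQ2 hQodd hQeven hQl1 hQl2 ht
  have hw₀ : alternatingWeight R C r' 𝒞' 0 = 0 := by
    simpa (disch := omega) [r', 𝒞', alternatingWeight, Function.update_of_ne] using hinit.1
  have hwl : alternatingWeight R C r' 𝒞' (l + 1) = 0 := by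
    simpa (disch := omega) [r', 𝒞', alternatingWeight, Nat.not_odd_iff_even.mpr hl.add_one,
      Function.update_of_ne, hend] using htarget.1
  calc ∑ t ∈ Ico 1 (l + 2), (Tcol C (Q t).1 (Q (t+1)).2 + Trow R (Q t).2 (Q (t+1)).1)
      = ∑ t ∈ Ico 1 (l + 2), transformationStepCost R C (interleave r' 𝒞') t := by
        refine sum_congr rfl fun t ht => ?_
        obtain ⟨ht1, htl⟩ := mem_Ico.mp ht
        rw [transformationStepCost, ← hQ t (mem_Icc.mpr ⟨ht1, by omega⟩),
          ← hQ (t + 1) (mem_Icc.mpr ⟨by omega, htl⟩)]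
    _ = ∑ t ∈ Ico 1 (l + 2),
          (alternatingWeight R C r' 𝒞' (t - 1) + alternatingWeight R C r' 𝒞' t) :=
        sum_congr rfl fun t ht => transformationStepCost_interleave R C r' 𝒞' (mem_Ico.mp ht).1
    _ = 2 * costP := by
        rw [sum_Ico_pred_add_self _ l hw₀ hwl,
          sum_congr rfl fun t => alternatingWeight_update R C r 𝒞 rstar (𝒞 1), hcostP,
          two_nsmul, two_mul]
        rfl

/-- Given equilibria `(r(1),𝒞(1))` and `(r*,𝒞*)` and an alternating path
`P : r(1) → 𝒞(2) → r(3) → 𝒞(4) → ⋯ → r(l) → 𝒞*` of (odd) length `l`, the sequence `Q` with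
`Q₁ = (r(1),𝒞(1))`, `Q₂ = (r(1),𝒞(2))`, `Q_t = (r(t),𝒞(t-1))` for odd `3 ≤ t ≤ l`,
`Q_t = (r(t-1),𝒞(t))` for even `3 ≤ t ≤ l`, `Q_{l+1} = (r(l),𝒞*)`, `Q_{l+2} = (r*,𝒞*)` is a
transformation path from `(r(1),𝒞(1))` to `(r*,𝒞*)` whose total cost is exactly `2·Cost(P)`
and whose length (number of steps, `l+1`) is one more than the length of `P`. -/
theorem transformation_path_from_alternating_path
    (m n k : ℕ) [NeZero m] [NeZero n]
    (R C : Fin m → Fin n → ℝ)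
    (l : ℕ) (hl : Odd l) (hl1 : 1 ≤ l)
    (r : ℕ → Fin m) (𝒞 : ℕ → Fin k → Fin n)
    (rstar : Fin m) (Cstar : Fin k → Fin n)
    (hinit : IsEquilibrium R C (r 1) (𝒞 1))
    (htarget : IsEquilibrium R C rstar Cstar)
    (hend : 𝒞 (l + 1) = Cstar)
    (costP : ℝ)
    (hcostP : costP = ∑ t ∈ Finset.Ico 1 (l + 1),
      if Odd t then Tcol C (r t) (𝒞 (t+1)) else Trow R (𝒞 t) (r (t+1)))
    (Q : ℕ → Fin m × (Fin k → Fin n))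
    (hQ1 : Q 1 = (r 1, 𝒞 1))
    (hQ2 : Q 2 = (r 1, 𝒞 2))
    (hQodd : ∀ t, 3 ≤ t → t ≤ l → Odd t → Q t = (r t, 𝒞 (t - 1)))
    (hQeven : ∀ t, 3 ≤ t → t ≤ l → Even t → Q t = (r (t - 1), 𝒞 t))
    (hQl1 : Q (l + 1) = (r l, Cstar))
    (hQl2 : Q (l + 2) = (rstar, Cstar)) :
    Q 1 = (r 1, 𝒞 1) ∧ Q (l + 2) = (rstar, Cstar) ∧
      (∑ t ∈ Finset.Ico 1 (l + 2),
        (Tcol C (Q t).1 (Q (t+1)).2 + Trow R (Q t).2 (Q (t+1)).1)) = 2 * costP :=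
  transformation_path_from_alternating_path_general m n k R C l hl r 𝒞 rstar Cstar hinit htarget
    hend costP hcostP Q hQ1 hQ2 hQodd hQeven hQl1 hQl2
end

section
/- Let (r(1),𝒞(1)) and (r*,𝒞*) be equilibria. Then the minimum total cost of a transformation path from (r(1),𝒞(1)) to (r*,𝒞*) equals exactly two times the minimum cost of an alternating path whose first vertex is r(1) or 𝒞(1) and whose last vertex is r* or 𝒞*. -/
open Finset

/-- Total cost of the transformation path `P 0, P 1, …, P L`. -/
noncomputable def pathCost {m n k : ℕ} [NeZero m] [NeZero n] (R C : Fin m → Fin n → ℝ)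
    (P : ℕ → Fin m × (Fin k → Fin n)) (L : ℕ) : ℝ :=
  ∑ t ∈ Finset.range L, (Tcol C (P t).1 (P (t+1)).2 + Trow R (P t).2 (P (t+1)).1)

/-- The set of total costs of transformation paths from profile `a` to profile `b`. -/
noncomputable def transCosts {m n k : ℕ} [NeZero m] [NeZero n] (R C : Fin m → Fin n → ℝ)
    (a b : Fin m × (Fin k → Fin n)) : Set ℝ :=
  {x | ∃ (L : ℕ) (P : ℕ → Fin m × (Fin k → Fin n)),
    P 0 = a ∧ P L = b ∧ x = pathCost R C P L}

/-- A vertex of an alternating path: a row strategy or a column profile. -/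
abbrev AltVert (m n k : ℕ) := Fin m ⊕ (Fin k → Fin n)

/-- Weight of a step of an alternating path. -/
noncomputable def altWeight {m n k : ℕ} [NeZero m] [NeZero n] (R C : Fin m → Fin n → ℝ) :
    AltVert m n k → AltVert m n k → ℝ
  | Sum.inl r, Sum.inr c => Tcol C r c
  | Sum.inr c, Sum.inl r => Trow R c r
  | _, _ => 0

/-- `v 0, v 1, …, v L` is an alternating path: row strategies and column profiles alternate. -/
def IsAlt {m n k : ℕ} (v : ℕ → AltVert m n k) (L : ℕ) : Prop :=
  ∀ t < L, (v t).isLeft ≠ (v (t+1)).isLeft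

/-- Cost of the alternating path `v 0, v 1, …, v L`. -/
noncomputable def altCost {m n k : ℕ} [NeZero m] [NeZero n] (R C : Fin m → Fin n → ℝ)
    (v : ℕ → AltVert m n k) (L : ℕ) : ℝ :=
  ∑ t ∈ Finset.range L, altWeight R C (v t) (v (t+1))

/-!
Splitting a transformation path `(r(t), 𝒞(t))` by parity of `t` into the two alternating paths
`r(0), 𝒞(1), r(2), …` and `𝒞(0), r(1), 𝒞(2), …` writes its cost as the sum of their costs, so it
is at least twice the optimal alternating cost. Conversely, pad an optimal alternating path at
both ends by the missing component of the endpoint equilibria (a step of weight zero); the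
profiles formed by consecutive vertices then make a transformation path each of whose steps pays
for two consecutive alternating steps, so it costs exactly twice as much. A minimum exists since
alternating costs are sums of finitely many nonnegative step weights, hence well-ordered.
-/

section

variable {m n k : ℕ}

def IsComponent (x : AltVert m n k) (p : Fin m × (Fin k → Fin n)) : Prop :=
  x = .inl p.1 ∨ x = .inr p.2

/-- The alternating path reading `P` starting from its row strategy (`s = 0`) or from its column
profile (`s = 1`). -/
def zigzag (P : ℕ → Fin m × (Fin k → Fin n)) (s t : ℕ) : AltVert m n k :=
  if Even (s + t) then .inl (P t).1 else .inr (P t).2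

lemma isComponent_zigzag (P : ℕ → Fin m × (Fin k → Fin n)) (s t : ℕ) :
    IsComponent (zigzag P s t) (P t) := by
  unfold zigzag
  split_ifs
  · exact .inl rfl
  · exact .inr rfl

lemma isAlt_zigzag (P : ℕ → Fin m × (Fin k → Fin n)) (s L : ℕ) : IsAlt (zigzag P s) L := by
  intro t _
  by_cases h : Even (s + t) <;> simp [zigzag, h, ← add_assoc, Nat.even_add_one]

def otherComponent (p : Fin m × (Fin k → Fin n)) : AltVert m n k → AltVert m n k
  | .inl _ => .inr p.2
  | .inr _ => .inl p.1

lemma isLeft_otherComponent (p : Fin m × (Fin k → Fin n)) (x : AltVert m n k) :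
    (otherComponent p x).isLeft ≠ x.isLeft := by
  cases x <;> simp [otherComponent]

def pad (a b : Fin m × (Fin k → Fin n)) (v : ℕ → AltVert m n k) (L u : ℕ) : AltVert m n k :=
  if u = 0 then otherComponent a (v 0) else if u ≤ L + 1 then v (u - 1) else otherComponent b (v L)

section Pad

variable (a b : Fin m × (Fin k → Fin n)) (v : ℕ → AltVert m n k) {L : ℕ}

lemma pad_zero : pad a b v L 0 = otherComponent a (v 0) := rfl

lemma pad_succ {u : ℕ} (hu : u ≤ L) : pad a b v L (u + 1) = v u := by
  simp [pad, hu]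

lemma pad_add_two : pad a b v L (L + 2) = otherComponent b (v L) := by
  simp [pad]

lemma isAlt_pad (hv : IsAlt v L) : IsAlt (pad a b v L) (L + 2) := by
  rintro (_ | u) hu
  · rw [pad_zero, zero_add, pad_succ a b v (Nat.zero_le L)]
    exact isLeft_otherComponent a (v 0)
  · rcases (show u < L ∨ u = L by omega) with hu | rfl
    · rw [pad_succ a b v hu.le, pad_succ a b v hu]
      exact hv u hu
    · rw [pad_succ a b v le_rfl, pad_add_two]
      exact (isLeft_otherComponent b (v u)).symm

end Pad

lemma Trow_nonneg [NeZero m] (R : Fin m → Fin n → ℝ) (𝒞 : Fin k → Fin n) (i : Fin m) :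
    0 ≤ Trow R 𝒞 i :=
  sub_nonneg.2 (le_sup' (fun i => ∑ j, R i (𝒞 j)) (mem_univ i))

lemma Tcol_nonneg [NeZero n] (C : Fin m → Fin n → ℝ) (i : Fin m) (𝒞 : Fin k → Fin n) :
    0 ≤ Tcol C i 𝒞 := by
  rw [Tcol, sub_nonneg]
  calc ∑ j, C i (𝒞 j) ≤ ∑ _j : Fin k, univ.sup' univ_nonempty (C i) :=
        sum_le_sum fun j _ => le_sup' (C i) (mem_univ _)
    _ = k * univ.sup' univ_nonempty (C i) := by simp

variable [NeZero m] [NeZero n]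

/-- The profile with components `x` and `y`; junk unless one is a row strategy and the other a
column profile. -/
def pairProfile : AltVert m n k → AltVert m n k → Fin m × (Fin k → Fin n)
  | .inl r, .inr c | .inr c, .inl r => (r, c)
  | .inl r, .inl _ => (r, 0)
  | .inr c, .inr _ => (0, c)

lemma pairProfile_otherComponent {x : AltVert m n k} {p : Fin m × (Fin k → Fin n)}
    (hx : IsComponent x p) :
    pairProfile (otherComponent p x) x = p ∧ pairProfile x (otherComponent p x) = p := by
  rcases hx with rfl | rfl <;> simp [otherComponent, pairProfile]

variable (R C : Fin m → Fin n → ℝ)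

def altCosts (a b : Fin m × (Fin k → Fin n)) : Set ℝ :=
  {x | ∃ (L : ℕ) (v : ℕ → AltVert m n k),
    IsAlt v L ∧ IsComponent (v 0) a ∧ IsComponent (v L) b ∧ x = altCost R C v L}

lemma altWeight_nonneg (x y : AltVert m n k) : 0 ≤ altWeight R C x y := by
  rcases x with _ | _ <;> rcases y with _ | _ <;>
    simp only [altWeight, le_refl, Trow_nonneg, Tcol_nonneg]

lemma altWeight_otherComponent {x : AltVert m n k} {p : Fin m × (Fin k → Fin n)}
    (hp : IsEquilibrium R C p.1 p.2) (hx : IsComponent x p) :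
    altWeight R C (otherComponent p x) x = 0 ∧ altWeight R C x (otherComponent p x) = 0 := by
  rcases hx with rfl | rfl <;> simp [otherComponent, altWeight, hp.1, hp.2]

lemma altCost_congr {v w : ℕ → AltVert m n k} {L : ℕ} (h : ∀ u ≤ L, v u = w u) :
    altCost R C v L = altCost R C w L :=
  sum_congr rfl fun u hu => by
    have := mem_range.1 hu
    rw [h u (by omega), h (u + 1) (by omega)]

lemma altCost_succ (v : ℕ → AltVert m n k) (L : ℕ) :
    altCost R C v (L + 1) = altCost R C v L + altWeight R C (v L) (v (L + 1)) :=
  sum_range_succ _ _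

lemma altCost_succ' (v : ℕ → AltVert m n k) (L : ℕ) :
    altCost R C v (L + 1) = altWeight R C (v 0) (v 1) + altCost R C (fun u => v (u + 1)) L :=
  (sum_range_succ' _ _).trans (add_comm _ _)

lemma altCost_mem_closure (v : ℕ → AltVert m n k) (L : ℕ) :
    altCost R C v L ∈ AddSubmonoid.closure
      (Set.range fun e : AltVert m n k × AltVert m n k => altWeight R C e.1 e.2) :=
  AddSubmonoid.sum_mem _ fun t _ => AddSubmonoid.subset_closure ⟨(v t, v (t + 1)), rfl⟩

lemma altCosts_isPWO (a b : Fin m × (Fin k → Fin n)) : (altCosts R C a b).IsPWO := by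
  refine ((Set.finite_range fun e : AltVert m n k × AltVert m n k => altWeight R C e.1 e.2)
    |>.isPWO.addSubmonoid_closure ?_).mono ?_
  · rintro _ ⟨e, rfl⟩
    exact altWeight_nonneg R C e.1 e.2
  · rintro _ ⟨L, v, -, -, -, rfl⟩
    exact altCost_mem_closure R C v L

lemma exists_isLeast_altCosts (a b : Fin m × (Fin k → Fin n)) :
    ∃ c, IsLeast (altCosts R C a b) c := by
  let v : ℕ → AltVert m n k := fun u => if u = 0 then .inl a.1 else .inr b.2
  have hne : (altCosts R C a b).Nonempty :=
    ⟨altCost R C v 1, 1, v, fun t ht => by simp [v, show t = 0 by omega], .inl rfl, .inr rfl, rfl⟩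
  have hwf := (altCosts_isPWO R C a b).isWF
  exact ⟨hwf.min hne, hwf.min_mem hne, fun x hx => hwf.min_le hne hx⟩

lemma altWeight_zigzag_add (P : ℕ → Fin m × (Fin k → Fin n)) (t : ℕ) :
    altWeight R C (zigzag P 0 t) (zigzag P 0 (t + 1)) +
        altWeight R C (zigzag P 1 t) (zigzag P 1 (t + 1)) =
      Tcol C (P t).1 (P (t + 1)).2 + Trow R (P t).2 (P (t + 1)).1 := by
  unfold zigzag
  by_cases ht : Even t
  · simp [ht, parity_simps, altWeight]
  · simp [ht, parity_simps, altWeight, add_comm]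

lemma pathCost_eq_altCost_zigzag_add (P : ℕ → Fin m × (Fin k → Fin n)) (L : ℕ) :
    pathCost R C P L = altCost R C (zigzag P 0) L + altCost R C (zigzag P 1) L := by
  simp only [pathCost, altCost, ← sum_add_distrib, altWeight_zigzag_add]

lemma two_mul_le_of_mem_transCosts {a b : Fin m × (Fin k → Fin n)} {c x : ℝ}
    (hc : IsLeast (altCosts R C a b) c) (hx : x ∈ transCosts R C a b) : 2 * c ≤ x := by
  obtain ⟨L, P, rfl, rfl, rfl⟩ := hx
  have h₀ := hc.2 ⟨L, zigzag P 0, isAlt_zigzag P 0 L, isComponent_zigzag P 0 0,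
    isComponent_zigzag P 0 L, rfl⟩
  have h₁ := hc.2 ⟨L, zigzag P 1, isAlt_zigzag P 1 L, isComponent_zigzag P 1 0,
    isComponent_zigzag P 1 L, rfl⟩
  rw [pathCost_eq_altCost_zigzag_add]
  linarith

lemma Tcol_add_Trow_pairProfile {x y z : AltVert m n k} (hxy : x.isLeft ≠ y.isLeft)
    (hyz : y.isLeft ≠ z.isLeft) :
    Tcol C (pairProfile x y).1 (pairProfile y z).2 +
        Trow R (pairProfile x y).2 (pairProfile y z).1 =
      altWeight R C x y + altWeight R C y z := by
  rcases x with _ | _ <;> rcases y with _ | _ <;> rcases z with _ | _ <;>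
    simp_all [pairProfile, altWeight, add_comm]

lemma pathCost_pairProfile {w : ℕ → AltVert m n k} {N : ℕ} (hw : IsAlt w (N + 1)) :
    pathCost R C (fun t => pairProfile (w t) (w (t + 1))) N =
      altCost R C w N + altCost R C (fun t => w (t + 1)) N := by
  rw [altCost, altCost, ← sum_add_distrib, pathCost]
  refine sum_congr rfl fun t ht => ?_
  have := mem_range.1 ht
  exact Tcol_add_Trow_pairProfile R C (hw t (by omega)) (hw (t + 1) (by omega))

lemma two_mul_altCost_mem_transCosts {a b : Fin m × (Fin k → Fin n)}
    (ha : IsEquilibrium R C a.1 a.2) (hb : IsEquilibrium R C b.1 b.2) {v : ℕ → AltVert m n k}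
    {L : ℕ} (hv : IsAlt v L) (h₀ : IsComponent (v 0) a) (hL : IsComponent (v L) b) :
    2 * altCost R C v L ∈ transCosts R C a b := by
  set w := pad a b v L
  have hw₀ : w 0 = otherComponent a (v 0) := pad_zero a b v
  have hw₁ : w 1 = v 0 := pad_succ a b v (Nat.zero_le L)
  have hwL : w (L + 1) = v L := pad_succ a b v le_rfl
  have hwL₁ : w (L + 1 + 1) = otherComponent b (v L) := pad_add_two a b v
  have hshift : altCost R C (fun u => w (u + 1)) L = altCost R C v L :=
    altCost_congr R C fun u hu => pad_succ a b v hu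
  have hhead : altCost R C w (L + 1) = altCost R C v L := by
    rw [altCost_succ', hshift, hw₀, hw₁, (altWeight_otherComponent R C ha h₀).1, zero_add]
  have htail : altCost R C (fun u => w (u + 1)) (L + 1) = altCost R C v L := by
    rw [altCost_succ, hshift, hwL, hwL₁, (altWeight_otherComponent R C hb hL).2, add_zero]
  refine ⟨L + 1, fun t => pairProfile (w t) (w (t + 1)), ?_, ?_, ?_⟩
  · beta_reduce
    rw [zero_add, hw₀, hw₁]
    exact (pairProfile_otherComponent h₀).1
  · beta_reduce
    rw [hwL, hwL₁]
    exact (pairProfile_otherComponent hL).2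
  · rw [pathCost_pairProfile R C (isAlt_pad a b v hv), hhead, htail, two_mul]

end

/-- Given equilibria `(r(1),𝒞(1))` and `(r*,𝒞*)`, the minimum total cost of a transformation
path from `(r(1),𝒞(1))` to `(r*,𝒞*)` is exactly two times the minimum cost of an alternating
path whose first vertex is `r(1)` or `𝒞(1)` and whose last vertex is `r*` or `𝒞*`. -/
theorem optimal_transformation_cost_eq_twice_optimal_alternating_cost
    (m n k : ℕ) [NeZero m] [NeZero n]
    (R C : Fin m → Fin n → ℝ)
    (r1 rstar : Fin m) (C1 Cstar : Fin k → Fin n)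
    (hinit : IsEquilibrium R C r1 C1)
    (htarget : IsEquilibrium R C rstar Cstar) :
    ∃ a b : ℝ,
      IsLeast (transCosts R C (r1, C1) (rstar, Cstar)) a ∧
      IsLeast {x | ∃ (L : ℕ) (v : ℕ → AltVert m n k),
        IsAlt v L ∧
        (v 0 = Sum.inl r1 ∨ v 0 = Sum.inr C1) ∧
        (v L = Sum.inl rstar ∨ v L = Sum.inr Cstar) ∧
        x = altCost R C v L} b ∧
      a = 2 * b := by
  obtain ⟨c, hc⟩ := exists_isLeast_altCosts R C (r1, C1) (rstar, Cstar)
  refine ⟨2 * c, c, ⟨?_, fun x hx => two_mul_le_of_mem_transCosts R C hc hx⟩, hc, rfl⟩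
  obtain ⟨L, v, hv, h₀, hL, rfl⟩ := hc.1
  exact two_mul_altCost_mem_transCosts R C (a := (r1, C1)) (b := (rstar, Cstar)) hinit htarget
    hv h₀ hL
end

section
/- For all row strategies i, j ∈ Fin m and every column profile 𝒞 : Fin k → Fin n, the cost of the length-2 alternating path r^i → 𝒞 → r^j satisfies T_{r^i}(𝒞) + T_𝒞(r^j) ≥ w*_{ij}, where w*_{ij} is the minimum over z ∈ Fin m of the optimal value of the linear program LP_z(i,j). Equivalently, the fractional relaxation w*_{ij} is a lower bound on the minimum cost of any two-step alternating path from r^i to r^j. -/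
open Finset

/-- Feasibility for the linear program `LP_z`: `x ≥ 0`, `∑_q x_q = k`, and `z` is a best row
response against the fractional column profile `x`. -/
def LPfeasible {m n : ℕ} (R : Fin m → Fin n → ℝ) (k : ℕ) (z : Fin m) (x : Fin n → ℝ) : Prop :=
  (∀ q, 0 ≤ x q) ∧ (∑ q, x q = (k : ℝ)) ∧
  (∀ z' : Fin m, ∑ q, x q * R z' q ≤ ∑ q, x q * R z q)

/-- Objective of the linear program `LP_z(i,j)`:
`[k·max_q C(i,q) − ∑_q x_q C(i,q)] + ∑_q x_q R(z,q) − ∑_q x_q R(j,q)`. -/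
noncomputable def LPobj {m n : ℕ} [NeZero n] (R C : Fin m → Fin n → ℝ) (k : ℕ)
    (i j z : Fin m) (x : Fin n → ℝ) : ℝ :=
  (k * (univ.sup' univ_nonempty fun q => C i q) - ∑ q, x q * C i q)
    + ∑ q, x q * R z q - ∑ q, x q * R j q

/-- The set of objective values attained by feasible solutions of the programs `LP_z(i,j)`,
`z ∈ Fin m`; its infimum is `w*_{ij} = min_z opt(LP_z(i,j))`. -/
noncomputable def wstarSet {m n : ℕ} [NeZero n] (R C : Fin m → Fin n → ℝ) (k : ℕ)
    (i j : Fin m) : Set ℝ :=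
  {y | ∃ (z : Fin m) (x : Fin n → ℝ), LPfeasible R k z x ∧ y = LPobj R C k i j z x}

/-!
Counting how many column players choose each column turns `𝒞` into a feasible point of `LP_z`
for a best row response `z` to `𝒞`, and its objective value is exactly the path cost. Every
objective value of a feasible point is nonnegative, so `wstarSet` is bounded below and its `sInf`
is not the junk value of an unbounded set.
-/

variable {m n k : ℕ}

def profileCount (𝒞 : Fin k → Fin n) (q : Fin n) : ℝ :=
  #{j | 𝒞 j = q}

lemma sum_profileCount_mul (𝒞 : Fin k → Fin n) (f : Fin n → ℝ) :
    ∑ q, profileCount 𝒞 q * f q = ∑ j, f (𝒞 j) := by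
  refine Eq.trans (sum_congr rfl fun q _ => ?_) (sum_fiberwise univ 𝒞 (f ∘ 𝒞))
  rw [profileCount, ← nsmul_eq_mul, ← sum_const]
  exact sum_congr rfl fun l hl => congrArg f (mem_filter.1 hl).2.symm

lemma lpFeasible_profileCount (R : Fin m → Fin n → ℝ) (𝒞 : Fin k → Fin n) {z : Fin m}
    (hz : ∀ z', ∑ j, R z' (𝒞 j) ≤ ∑ j, R z (𝒞 j)) :
    LPfeasible R k z (profileCount 𝒞) := by
  refine ⟨fun q => Nat.cast_nonneg _, ?_, fun z' => ?_⟩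
  · simpa using sum_profileCount_mul 𝒞 1
  · simpa only [sum_profileCount_mul] using hz z'

lemma lpObj_profileCount [NeZero m] [NeZero n] (R C : Fin m → Fin n → ℝ) (i j : Fin m)
    (𝒞 : Fin k → Fin n) {z : Fin m}
    (hz : ∑ l, R z (𝒞 l) = univ.sup' univ_nonempty fun i => ∑ l, R i (𝒞 l)) :
    LPobj R C k i j z (profileCount 𝒞) = Tcol C i 𝒞 + Trow R 𝒞 j := by
  simp only [LPobj, Tcol, Trow, sum_profileCount_mul, ← hz]
  ring

lemma LPfeasible.lpObj_nonneg [NeZero n] {R : Fin m → Fin n → ℝ} {z : Fin m} {x : Fin n → ℝ}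
    (hx : LPfeasible R k z x) (C : Fin m → Fin n → ℝ) (i j : Fin m) :
    0 ≤ LPobj R C k i j z x := by
  obtain ⟨hx_nonneg, hx_sum, hz⟩ := hx
  set M := univ.sup' univ_nonempty fun q => C i q
  have hC : ∑ q, x q * C i q ≤ k * M := calc
    ∑ q, x q * C i q ≤ ∑ q, x q * M :=
      sum_le_sum fun q _ => mul_le_mul_of_nonneg_left (le_sup' _ (mem_univ q)) (hx_nonneg q)
    _ = k * M := by rw [← sum_mul, hx_sum]
  have hR := hz j
  rw [LPobj]
  linarith

lemma bddBelow_wstarSet [NeZero n] (R C : Fin m → Fin n → ℝ) (i j : Fin m) :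
    BddBelow (wstarSet R C k i j) := by
  refine ⟨0, ?_⟩
  rintro _ ⟨z, x, hx, rfl⟩
  exact hx.lpObj_nonneg C i j

/-- The fractional LP value `w*_{ij} = min_z opt(LP_z(i,j))` is a lower bound on the cost
`T_{r^i}(𝒞) + T_𝒞(r^j)` of any length-2 alternating path `r^i → 𝒞 → r^j`. -/
theorem lp_value_le_two_step_alternating_cost
    (m n k : ℕ) [NeZero m] [NeZero n]
    (R C : Fin m → Fin n → ℝ)
    (i j : Fin m) (𝒞 : Fin k → Fin n) :
    sInf (wstarSet R C k i j) ≤ Tcol C i 𝒞 + Trow R 𝒞 j := by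
  obtain ⟨z, -, hz⟩ := exists_mem_eq_sup' univ_nonempty fun i : Fin m => ∑ l, R i (𝒞 l)
  have hz_best : ∀ z', ∑ l, R z' (𝒞 l) ≤ ∑ l, R z (𝒞 l) := fun z' =>
    hz ▸ le_sup' (fun i : Fin m => ∑ l, R i (𝒞 l)) (mem_univ z')
  refine csInf_le (bddBelow_wstarSet R C i j) ⟨z, profileCount 𝒞, ?_, ?_⟩
  · exact lpFeasible_profileCount R 𝒞 hz_best
  · exact (lpObj_profileCount R C i j 𝒞 hz.symm).symm
end

section
/- Assume all entries of R and C are nonnegative. Fix row strategies i, j ∈ Fin m and z ∈ Fin m, and let x ∈ ℝ^n be an optimal solution of LP_z(i,j) achieving the minimum value w*_{ij} = min_z opt(LP_z(i,j)). Let u ∈ Fin n minimize q ↦ max_{p ∈ Fin m} R(p,q), and define the rounded integer vector x' by x'_q = ⌊x_q⌋ for q ≠ u and x'_u = ⌊x_u⌋ + (k − ∑_q ⌊x_q⌋). Let 𝒞_{ij} be any column profile in which exactly x'_q of the k column players play strategy q. Then the cost w_{ij} = T_{r^i}(𝒞_{ij}) + T_{𝒞_{ij}}(r^j) of the length-2 alternating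 path r^i → 𝒞_{ij} → r^j satisfies w_{ij} − w*_{ij} ≤ 2‖R‖_{1,1} + ‖C‖_{1,1}. -/
open Finset

/-!
The cost of the path exceeds the LP objective at `x` by three rounding errors:
`∑ (x - x') C_i`, `∑ (x - x') R_j` and `max_p ∑ x' R_p - ∑ x R_z`. Off the pivot `u` the rounding
lowers each coordinate by less than one, and at `u` it raises it, so the first two are bounded by
a row sum of `C` and of `R`. For the third, feasibility gives `∑ x R_p ≤ ∑ x R_z`; the surplus
moved onto `u` is less than one unit per other column, and it is paid at an entry of column `u`,
whose maximum is the smallest column maximum, so it costs at most `∑_q max_p R(p,q) ≤ ‖R‖₁₁`.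
-/

section Rounding

variable {ι : Type*} [Fintype ι]

structure IsDownRoundingExcept (x y : ι → ℝ) (u : ι) : Prop where
  sum_eq : ∑ q, y q = ∑ q, x q
  le : ∀ q ≠ u, y q ≤ x q
  le_add_one : ∀ q ≠ u, x q ≤ y q + 1

namespace IsDownRoundingExcept

variable [DecidableEq ι] {x y : ι → ℝ} {u : ι}

theorem sub_apply_pivot (h : IsDownRoundingExcept x y u) :
    y u - x u = ∑ q ∈ univ.erase u, (x q - y q) := by
  have hsum := h.sum_eq
  rw [← add_sum_erase _ _ (mem_univ u), ← add_sum_erase _ x (mem_univ u)] at hsum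
  rw [sum_sub_distrib]
  linarith

theorem le_apply_pivot (h : IsDownRoundingExcept x y u) : x u ≤ y u := by
  have : 0 ≤ ∑ q ∈ univ.erase u, (x q - y q) :=
    sum_nonneg fun q hq => sub_nonneg.2 (h.le q (ne_of_mem_erase hq))
  linarith [h.sub_apply_pivot]

theorem sum_mul_sub_sum_mul_le (h : IsDownRoundingExcept x y u) {g : ι → ℝ}
    (hg : ∀ q, 0 ≤ g q) : ∑ q, x q * g q - ∑ q, y q * g q ≤ ∑ q, g q := by
  rw [← sum_sub_distrib]
  refine sum_le_sum fun q _ => ?_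
  rw [← sub_mul]
  by_cases hq : q = u
  · subst hq
    nlinarith [h.le_apply_pivot, hg q]
  · nlinarith [h.le_add_one q hq, hg q]

/-- The surplus placed on the pivot is at most one unit per other coordinate, and it is charged
there at the weight `g u`, which each `w q` dominates. -/
theorem sum_mul_sub_sum_mul_le_of_apply_pivot_le (h : IsDownRoundingExcept x y u)
    {g w : ι → ℝ} (hg : ∀ q, 0 ≤ g q) (hgw : ∀ q, g u ≤ w q) :
    ∑ q, y q * g q - ∑ q, x q * g q ≤ ∑ q, w q := by
  have hoff : ∑ q ∈ univ.erase u, (y q - x q) * g q ≤ 0 :=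
    sum_nonpos fun q hq =>
      mul_nonpos_of_nonpos_of_nonneg (sub_nonpos.2 (h.le q (ne_of_mem_erase hq))) (hg q)
  calc ∑ q, y q * g q - ∑ q, x q * g q
      = (y u - x u) * g u + ∑ q ∈ univ.erase u, (y q - x q) * g q := by
        rw [← sum_sub_distrib, ← add_sum_erase _ _ (mem_univ u)]
        simp only [sub_mul]
    _ ≤ ∑ q ∈ univ.erase u, (x q - y q) * g u := by
        rw [h.sub_apply_pivot, sum_mul]
        linarith
    _ ≤ ∑ q ∈ univ.erase u, w q := by
        refine sum_le_sum fun q hq => ?_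
        nlinarith [h.le_add_one q (ne_of_mem_erase hq), hg u, hgw q]
    _ ≤ ∑ q, w q :=
        sum_le_sum_of_subset_of_nonneg (erase_subset _ _) fun q _ _ => (hg u).trans (hgw q)

end IsDownRoundingExcept

theorem isDownRoundingExcept_of_floor [DecidableEq ι] {x : ι → ℝ} {u : ι} {k : ℤ}
    (hk : ∑ q, x q = k) {x' : ι → ℤ} (hx' : ∀ q ≠ u, x' q = ⌊x q⌋)
    (hx'u : x' u = ⌊x u⌋ + (k - ∑ q, ⌊x q⌋)) :
    IsDownRoundingExcept x (fun q => (x' q : ℝ)) u where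
  sum_eq := by
    have hoff : ∑ q ∈ univ.erase u, x' q = ∑ q ∈ univ.erase u, ⌊x q⌋ :=
      sum_congr rfl fun q hq => hx' q (ne_of_mem_erase hq)
    have hx'sum : ∑ q, x' q = k := by
      rw [← add_sum_erase _ _ (mem_univ u), hoff, hx'u, ← add_sum_erase _ (fun q => ⌊x q⌋)
        (mem_univ u)]
      ring
    rw [hk]
    exact_mod_cast hx'sum
  le q hq := by rw [hx' q hq]; exact Int.floor_le _
  le_add_one q hq := by rw [hx' q hq]; exact (Int.lt_floor_add_one _).le

end Rounding

section Profiles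

variable {m n k : ℕ} {𝒞 : Fin k → Fin n} {y : Fin n → ℝ}

theorem sum_comp_eq_sum_mul (hy : ∀ q, (#{a | 𝒞 a = q} : ℝ) = y q) (g : Fin n → ℝ) :
    ∑ a, g (𝒞 a) = ∑ q, y q * g q := by
  rw [← sum_fiberwise' univ 𝒞 g]
  refine sum_congr rfl fun q _ => ?_
  rw [sum_const, nsmul_eq_mul, hy]

theorem Tcol_eq_of_count [NeZero n] (hy : ∀ q, (#{a | 𝒞 a = q} : ℝ) = y q)
    (C : Fin m → Fin n → ℝ) (i : Fin m) :
    Tcol C i 𝒞 = k * (univ.sup' univ_nonempty fun q => C i q) - ∑ q, y q * C i q := by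
  rw [Tcol, sum_comp_eq_sum_mul hy]

theorem Trow_eq_of_count [NeZero m] (hy : ∀ q, (#{a | 𝒞 a = q} : ℝ) = y q)
    (R : Fin m → Fin n → ℝ) (j : Fin m) :
    Trow R 𝒞 j =
      (univ.sup' univ_nonempty fun p => ∑ q, y q * R p q) - ∑ q, y q * R j q := by
  simp only [Trow, sum_comp_eq_sum_mul hy]

end Profiles

theorem sup_sum_mul_le_of_isDownRoundingExcept {m n k : ℕ} [NeZero m] [NeZero n]
    {R : Fin m → Fin n → ℝ} (hR : ∀ p q, 0 ≤ R p q) {z : Fin m} {x y : Fin n → ℝ}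
    (hfeas : LPfeasible R k z x) {u : Fin n} (hround : IsDownRoundingExcept x y u)
    (hu : ∀ q, (univ.sup' univ_nonempty fun p => R p u) ≤
      univ.sup' univ_nonempty fun p => R p q) :
    (univ.sup' univ_nonempty fun p => ∑ q, y q * R p q) ≤
      ∑ q, x q * R z q + ∑ p, ∑ q, R p q := by
  refine sup'_le _ _ fun p _ => ?_
  have hpivot : ∀ q, R p u ≤ ∑ p', R p' q := fun q =>
    calc R p u ≤ univ.sup' univ_nonempty fun p' => R p' u := le_sup' (fun p' => R p' u) (mem_univ p)
      _ ≤ univ.sup' univ_nonempty fun p' => R p' q := hu q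
      _ ≤ ∑ p', R p' q :=
        sup'_le _ _ fun p' _ => single_le_sum (fun p'' _ => hR p'' q) (mem_univ p')
  have hround_p := hround.sum_mul_sub_sum_mul_le_of_apply_pivot_le (hR p) hpivot
  rw [sum_comm] at hround_p
  linarith [hfeas.2.2 p]

theorem rounded_two_step_cost_sub_lp_value_le_general
    (m n k : ℕ) [NeZero m] [NeZero n]
    (R C : Fin m → Fin n → ℝ)
    (hR : ∀ p q, 0 ≤ R p q) (hC : ∀ p q, 0 ≤ C p q)
    (i j z : Fin m) (x : Fin n → ℝ)
    (hfeas : LPfeasible R k z x)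
    (u : Fin n)
    (hu : ∀ q : Fin n, (univ.sup' univ_nonempty fun p => R p u) ≤
      univ.sup' univ_nonempty fun p => R p q)
    (x' : Fin n → ℤ)
    (hx' : ∀ q ≠ u, x' q = ⌊x q⌋)
    (hx'u : x' u = ⌊x u⌋ + ((k : ℤ) - ∑ q, ⌊x q⌋))
    (𝒞ij : Fin k → Fin n)
    (hcount : ∀ q : Fin n, ((univ.filter fun j' => 𝒞ij j' = q).card : ℤ) = x' q) :
    (Tcol C i 𝒞ij + Trow R 𝒞ij j) - LPobj R C k i j z x ≤
      2 * (∑ p, ∑ q, R p q) + ∑ p, ∑ q, C p q := by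
  have hround : IsDownRoundingExcept x (fun q => (x' q : ℝ)) u :=
    isDownRoundingExcept_of_floor (by exact_mod_cast hfeas.2.1) hx' hx'u
  have hy : ∀ q, (#{a | 𝒞ij a = q} : ℝ) = x' q := fun q => by exact_mod_cast hcount q
  have hCi := hround.sum_mul_sub_sum_mul_le (hC i)
  have hRj := hround.sum_mul_sub_sum_mul_le (hR j)
  have hsup := sup_sum_mul_le_of_isDownRoundingExcept hR hfeas hround hu
  have hCi_le : ∑ q, C i q ≤ ∑ p, ∑ q, C p q :=
    single_le_sum (f := fun p => ∑ q, C p q) (fun p _ => sum_nonneg fun q _ => hC p q) (mem_univ i)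
  have hRj_le : ∑ q, R j q ≤ ∑ p, ∑ q, R p q :=
    single_le_sum (f := fun p => ∑ q, R p q) (fun p _ => sum_nonneg fun q _ => hR p q) (mem_univ j)
  rw [Tcol_eq_of_count hy, Trow_eq_of_count hy, LPobj]
  linarith

/-- Rounding an optimal fractional LP solution `x` (achieving `w*_{ij}`) to an integral column
profile `𝒞_{ij}` — taking `x'_q = ⌊x_q⌋` for `q ≠ u` and `x'_u = ⌊x_u⌋ + (k − ∑_q ⌊x_q⌋)` where
`u` minimizes `q ↦ max_p R(p,q)` — yields a length-2 alternating path `r^i → 𝒞_{ij} → r^j`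
whose cost `w_{ij}` satisfies `w_{ij} − w*_{ij} ≤ 2‖R‖₁₁ + ‖C‖₁₁`. -/
theorem rounded_two_step_cost_sub_lp_value_le
    (m n k : ℕ) [NeZero m] [NeZero n]
    (R C : Fin m → Fin n → ℝ)
    (hR : ∀ p q, 0 ≤ R p q) (hC : ∀ p q, 0 ≤ C p q)
    (i j z : Fin m) (x : Fin n → ℝ)
    (hfeas : LPfeasible R k z x)
    (hopt : IsLeast (wstarSet R C k i j) (LPobj R C k i j z x))
    (u : Fin n)
    (hu : ∀ q : Fin n, (univ.sup' univ_nonempty fun p => R p u) ≤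
      univ.sup' univ_nonempty fun p => R p q)
    (x' : Fin n → ℤ)
    (hx' : ∀ q ≠ u, x' q = ⌊x q⌋)
    (hx'u : x' u = ⌊x u⌋ + ((k : ℤ) - ∑ q, ⌊x q⌋))
    (𝒞ij : Fin k → Fin n)
    (hcount : ∀ q : Fin n, ((univ.filter fun j' => 𝒞ij j' = q).card : ℤ) = x' q) :
    (Tcol C i 𝒞ij + Trow R 𝒞ij j) - LPobj R C k i j z x ≤
      2 * (∑ p, ∑ q, R p q) + ∑ p, ∑ q, C p q :=
  rounded_two_step_cost_sub_lp_value_le_general m n k R C hR hC i j z x hfeas u hu x' hx' hx'u 𝒞ij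
    hcount
end

section
/- In the game constructed from an EXACT COVER instance (with s column players, 3s+2 row strategies and w+2 column strategies), both the profile (r^1, c^1, …, c^1), where all players play their first strategy, and the profile (r^{3s+2}, c^{w+2}, …, c^{w+2}), where all players play their last strategy, are pure Nash equilibria: in each case the row strategy maximizes the row player's total payoff ∑_j R(i, 𝒞(j)) against the column profile, and every column player's strategy maximizes C(i, ·) against the row strategy. -/
open Finset

/-- The column players' payoff matrix of the game constructed from an EXACT COVER instance
(indices are 0-based: 0-based entry `(i,j)` is 1-based entry `(i+1,j+1)`). -/
noncomputable def ECcol (s w : ℕ) : Fin (3*s+2) → Fin (w+2) → ℝ :=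
  fun i j => if (i.val ≤ 3*s ∧ j.val ≤ w) ∨ (i.val = 3*s+1 ∧ j.val = w+1) then 1 else 0

/-- The row player's payoff matrix of the game constructed from an EXACT COVER instance with
subsets `X 1, …, X w ⊆ {1,…,3s}`; column `j` (for `1 ≤ j ≤ w`, 0-based) carries the
characteristic vector of `X j` (indices are 0-based). -/
noncomputable def ECrow (s w : ℕ) (X : ℕ → Finset ℕ) : Fin (3*s+2) → Fin (w+2) → ℝ :=
  fun i j =>
    if i.val = 0 then (if j.val = w+1 then -1 else 0)
    else if i.val = 3*s+1 then
      (if j.val = 0 then -(s : ℝ) else if j.val = w+1 then 1 else 1/(s : ℝ))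
    else
      if j.val = 0 ∨ j.val = w+1 then 0
      else if i.val ∈ X j.val then 1 else 0

/-! Against a constant column profile the row payoff is `s` times a single entry of `R`, so
both claims reduce to inspecting one column of `R` and one row of `C`: the first column of `R`
is `≤ 0` with `0` in the first row, its last column is `≤ 1` with `1` in the last row, and `C`
is `0`/`1`-valued with `1` at both endpoint profiles. -/

section ExactCoverGame

variable (s w : ℕ) (X : ℕ → Finset ℕ)

theorem ECcol_le_one (i : Fin (3*s+2)) (j : Fin (w+2)) : ECcol s w i j ≤ 1 := by
  unfold ECcol
  split_ifs <;> norm_num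

theorem ECcol_zero_zero : ECcol s w ⟨0, Nat.succ_pos _⟩ ⟨0, Nat.succ_pos _⟩ = 1 :=
  if_pos (Or.inl ⟨Nat.zero_le _, Nat.zero_le _⟩)

theorem ECcol_last_last :
    ECcol s w ⟨3*s+1, Nat.lt_succ_self _⟩ ⟨w+1, Nat.lt_succ_self _⟩ = 1 :=
  if_pos (Or.inr ⟨rfl, rfl⟩)

theorem ECrow_col_zero_nonpos (i : Fin (3*s+2)) : ECrow s w X i ⟨0, Nat.succ_pos _⟩ ≤ 0 := by
  unfold ECrow
  split_ifs <;> simp_all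

theorem ECrow_zero_zero : ECrow s w X ⟨0, Nat.succ_pos _⟩ ⟨0, Nat.succ_pos _⟩ = 0 := by
  simp [ECrow]

theorem ECrow_col_last_le_one (i : Fin (3*s+2)) :
    ECrow s w X i ⟨w+1, Nat.lt_succ_self _⟩ ≤ 1 := by
  unfold ECrow
  split_ifs <;> simp_all

theorem ECrow_last_last :
    ECrow s w X ⟨3*s+1, Nat.lt_succ_self _⟩ ⟨w+1, Nat.lt_succ_self _⟩ = 1 := by
  simp [ECrow]

end ExactCoverGame

/-- In the game constructed from an EXACT COVER instance, both the all-first-strategy profile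
`(r^1, c^1, …, c^1)` and the all-last-strategy profile `(r^{3s+2}, c^{w+2}, …, c^{w+2})` are
pure Nash equilibria: the row strategy maximizes the row player's total payoff
`∑_j R(i, 𝒞(j))` against the column profile, and every column player's strategy maximizes
`C(i, ·)` against the row strategy. -/
theorem exact_cover_game_endpoints_are_equilibria
    (s w : ℕ)
    (X : ℕ → Finset ℕ)
    (r₁ : Fin (3*s+2)) (c₁ : Fin (w+2)) (rLast : Fin (3*s+2)) (cLast : Fin (w+2))
    (hr₁ : r₁ = ⟨0, by omega⟩) (hc₁ : c₁ = ⟨0, by omega⟩)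
    (hrLast : rLast = ⟨3*s+1, by omega⟩) (hcLast : cLast = ⟨w+1, by omega⟩) :
    ((∀ i : Fin (3*s+2),
        ∑ j : Fin s, ECrow s w X i c₁ ≤ ∑ j : Fin s, ECrow s w X r₁ c₁) ∧
      (∀ q : Fin (w+2), ECcol s w r₁ q ≤ ECcol s w r₁ c₁)) ∧
    ((∀ i : Fin (3*s+2),
        ∑ j : Fin s, ECrow s w X i cLast ≤ ∑ j : Fin s, ECrow s w X rLast cLast) ∧
      (∀ q : Fin (w+2), ECcol s w rLast q ≤ ECcol s w rLast cLast)) := by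
  subst hr₁ hc₁ hrLast hcLast
  exact ⟨⟨fun i => sum_le_sum fun _ _ =>
        (ECrow_col_zero_nonpos s w X i).trans_eq (ECrow_zero_zero s w X).symm,
      fun q => (ECcol_le_one s w _ q).trans_eq (ECcol_zero_zero s w).symm⟩,
    fun i => sum_le_sum fun _ _ =>
      (ECrow_col_last_le_one s w X i).trans_eq (ECrow_last_last s w X).symm,
    fun q => (ECcol_le_one s w _ q).trans_eq (ECcol_last_last s w).symm⟩
end

section
/- Let m, k be integers with 1 ≤ k ≤ m, and let v₁,…,v_m and w₁,…,w_m be reals with 0 ≤ v_i ≤ V and 0 ≤ w_i ≤ W for all i. Define v'_i = v_i + m(V+1), w'_i = w_i + (W+1), V' = V + k·m(V+1), and W' = W + k(W+1). Then for every finite multiset I of indices from {1,…,m}: ∑_{i ∈ I} v'_i ≥ V' and ∑_{i ∈ I} w'_i ≤ W' hold if and only if |I| = k, ∑_{i ∈ I} v_i ≥ V, and ∑_{i ∈ I} w_i ≤ W. In particular, any multiset satisfying the primed constraints contains exactly k items. -/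
/-!
Every item gains the same padding in value and in weight, so a multiset of `n` items has
padded value `∑ v + n·m(V+1)` and padded weight `∑ w + n(W+1)`. The padding per item exceeds
the slack of the original constraints (`∑ w ≤ W < W + 1`, and `∑ v - V < m(V+1)` once
`n ≤ m`), so the padded weight bound forces `n ≤ k` and the padded value bound forces
`n ≥ k`. With `n = k` the paddings cancel and the primed constraints become the original ones.
-/

theorem Multiset.sum_map_add_const {ι M : Type*} [AddCommMonoid M] (I : Multiset ι)
    (f : ι → M) (c : M) :
    (I.map fun i => f i + c).sum = (I.map f).sum + Multiset.card I • c := by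
  simp [Multiset.sum_map_add]

theorem Nat.le_of_add_mul_le_add_mul {R : Type*} [Field R] [LinearOrder R] [IsStrictOrderedRing R]
    {a b M : R} {n k : ℕ} (hM : 0 ≤ M) (hab : b - a < M) (h : a + n * M ≤ b + k * M) :
    n ≤ k := by
  by_contra! hkn
  have hcast : (k + 1 : R) ≤ n := by exact_mod_cast hkn
  have := mul_le_mul_of_nonneg_right hcast hM
  linarith

/-- Correctness of the padding reduction from classical Knapsack to the exact-cardinality
variant: with `v'_i = v_i + m(V+1)`, `w'_i = w_i + (W+1)`, `V' = V + k·m(V+1)` and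
`W' = W + k(W+1)`, a multiset `I` of indices satisfies the primed constraints iff it has
exactly `k` elements and satisfies the original constraints. -/
theorem knapsack_padding_reduction_correct
    (m k : ℕ) (hk : 1 ≤ k) (hkm : k ≤ m)
    (v w : Fin m → ℝ) (V W : ℝ)
    (hv : ∀ i, 0 ≤ v i ∧ v i ≤ V)
    (hw : ∀ i, 0 ≤ w i ∧ w i ≤ W)
    (v' w' : Fin m → ℝ) (V' W' : ℝ)
    (hv' : ∀ i, v' i = v i + m * (V + 1))
    (hw' : ∀ i, w' i = w i + (W + 1))
    (hV' : V' = V + k * (m * (V + 1)))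
    (hW' : W' = W + k * (W + 1))
    (I : Multiset (Fin m)) :
    (V' ≤ (I.map v').sum ∧ (I.map w').sum ≤ W') ↔
      (Multiset.card I = k ∧ V ≤ (I.map v).sum ∧ (I.map w).sum ≤ W) := by
  obtain rfl : v' = fun i => v i + m * (V + 1) := funext hv'
  obtain rfl : w' = fun i => w i + (W + 1) := funext hw'
  subst hV' hW'
  simp only [Multiset.sum_map_add_const, nsmul_eq_mul]
  have i₀ : Fin m := ⟨0, by omega⟩
  have hV : 0 ≤ V := (hv i₀).1.trans (hv i₀).2
  have hW : 0 ≤ W := (hw i₀).1.trans (hw i₀).2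
  have hm : (1 : ℝ) ≤ m := by exact_mod_cast hk.trans hkm
  have hw_nonneg : 0 ≤ (I.map w).sum := Multiset.sum_nonneg (by simpa using fun i _ => (hw i).1)
  have hv_le : (I.map v).sum ≤ Multiset.card I * V := by
    simpa using Multiset.sum_le_card_nsmul (I.map v) V (by simpa using fun i _ => (hv i).2)
  constructor
  · rintro ⟨hval, hwt⟩
    have hle : Multiset.card I ≤ k :=
      Nat.le_of_add_mul_le_add_mul (by linarith) (by linarith) hwt
    have hcard_le : (Multiset.card I : ℝ) * V ≤ m * V := by
      gcongr
      exact_mod_cast hle.trans hkm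
    have hge : k ≤ Multiset.card I :=
      Nat.le_of_add_mul_le_add_mul (by positivity) (by linarith) hval
    obtain rfl := le_antisymm hle hge
    exact ⟨rfl, by linarith, by linarith⟩
  · rintro ⟨rfl, hval, hwt⟩
    exact ⟨by linarith, by linarith⟩
end

section
/- In the one-dimensional facility setting (common finite strategy set S ⊂ ℝ of locations, row payoff R(r,c) = −|r − c|, column payoff C(r,c) = g(|r − c|) with g antitone on [0,∞) and g(0) = 0), fix r^i, r^j ∈ S with r^i < r^j. Then there exists a column profile 𝒞 = (c¹,…,c^k) with entries in S that minimizes the length-2 alternating path cost T_{r^i}(𝒞) + T_𝒞(r^j) and satisfies r^i ≤ c^l ≤ r^j for every l = 1,…,k. Concretely, replacing every entry of a profile that lies strictly below r^i by r^i (respectively, strictly above r^j by r^j) does not increase the cost T_{r^i}(𝒞) + T_𝒞(r^j). -/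
/-!
Clamping a profile into `[rⁱ, rʲ]` never increases the path cost. Against a clamped profile the
row player has a best response `r ∈ S ∩ [rⁱ, rʲ]`, because projecting a location onto the
interval brings it closer to every entry. For such an `r`, the cost splits into a sum over the
entries `c` of `-|r - c| + |rʲ - c| - g |rⁱ - c|`; outside `[rⁱ, rʲ]` the distance part of this
term does not depend on `c`, while the `g`-part can only grow when `c` is moved to the nearer
endpoint. A cheapest profile exists because `S^k` is finite, and clamping it gives the optimal
profile between the endpoints.
-/

open Finset

/-- In the one-dimensional facility setting, the reward needed to incentivize the row player
(whose payoff at `r` is `−∑_l |r − 𝒞 l|`) to move to location `r'` against column profile `𝒞`,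
the row player choosing among the finite set `S` of locations. -/
noncomputable def TrowD (S : Finset ℝ) (hS : S.Nonempty) {k : ℕ}
    (𝒞 : Fin k → ℝ) (r' : ℝ) : ℝ :=
  (S.sup' hS fun r => -∑ l, |r - 𝒞 l|) - (-∑ l, |r' - 𝒞 l|)

/-- In the one-dimensional facility setting, the reward needed to incentivize the column
players (whose payoff is `g(|r − c|)`) to move to profile `𝒞` when the row plays `r`. -/
noncomputable def TcolD (S : Finset ℝ) (hS : S.Nonempty) {k : ℕ}
    (g : ℝ → ℝ) (r : ℝ) (𝒞 : Fin k → ℝ) : ℝ :=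
  k * (S.sup' hS fun c => g |r - c|) - ∑ l, g |r - 𝒞 l|

noncomputable def clamp (a b x : ℝ) : ℝ :=
  if x < a then a else if b < x then b else x

lemma clamp_mem_Icc {a b : ℝ} (hab : a ≤ b) (x : ℝ) : clamp a b x ∈ Set.Icc a b := by
  unfold clamp
  split_ifs <;> constructor <;> linarith

lemma clamp_mem {s : Set ℝ} {a b x : ℝ} (ha : a ∈ s) (hb : b ∈ s) (hx : x ∈ s) :
    clamp a b x ∈ s := by
  unfold clamp
  split_ifs <;> assumption

lemma abs_clamp_sub_le {a b y : ℝ} (hy : y ∈ Set.Icc a b) (x : ℝ) :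
    |clamp a b x - y| ≤ |x - y| := by
  obtain ⟨hay, hyb⟩ := hy
  unfold clamp
  split_ifs
  · rw [abs_of_nonpos (by linarith), abs_of_nonpos (by linarith)]; linarith
  · rw [abs_of_nonneg (by linarith), abs_of_nonneg (by linarith)]; linarith
  · exact le_rfl

def pathEntryCost (g : ℝ → ℝ) (a b r c : ℝ) : ℝ :=
  -|r - c| + |b - c| - g |a - c|

lemma pathEntryCost_clamp_le {g : ℝ → ℝ} (hg : AntitoneOn g (Set.Ici 0)) {a b r : ℝ}
    (hr : r ∈ Set.Icc a b) (c : ℝ) :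
    pathEntryCost g a b r (clamp a b c) ≤ pathEntryCost g a b r c := by
  obtain ⟨har, hrb⟩ := hr
  unfold pathEntryCost clamp
  split_ifs
  · have hg_le : g |a - c| ≤ g 0 :=
      hg (Set.mem_Ici.2 le_rfl) (Set.mem_Ici.2 (abs_nonneg _)) (abs_nonneg _)
    rw [sub_self, abs_zero, abs_of_nonneg (by linarith : 0 ≤ r - a),
      abs_of_nonneg (by linarith : 0 ≤ b - a), abs_of_nonneg (by linarith : 0 ≤ r - c),
      abs_of_nonneg (by linarith : 0 ≤ b - c)]
    linarith
  · have hg_le : g (c - a) ≤ g (b - a) :=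
      hg (Set.mem_Ici.2 (by linarith)) (Set.mem_Ici.2 (by linarith)) (by linarith)
    rw [sub_self, abs_zero, abs_sub_comm a b, abs_sub_comm a c,
      abs_of_nonneg (by linarith : 0 ≤ b - a), abs_of_nonneg (by linarith : 0 ≤ c - a),
      abs_of_nonpos (by linarith : r - b ≤ 0), abs_of_nonpos (by linarith : r - c ≤ 0),
      abs_of_nonpos (by linarith : b - c ≤ 0)]
    linarith
  · exact le_rfl

section PathCost

variable (S : Finset ℝ) (hS : S.Nonempty) {k : ℕ} (g : ℝ → ℝ) (a b : ℝ) (𝒞 : Fin k → ℝ)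

lemma TcolD_add_TrowD_eq :
    TcolD S hS g a 𝒞 + TrowD S hS 𝒞 b =
      k * (S.sup' hS fun c => g |a - c|) + (S.sup' hS fun r => -∑ l, |r - 𝒞 l|)
        + ∑ l, (|b - 𝒞 l| - g |a - 𝒞 l|) := by
  rw [TcolD, TrowD, sum_sub_distrib]
  ring

lemma add_sum_pathEntryCost_le_of_mem {r : ℝ} (hr : r ∈ S) :
    k * (S.sup' hS fun c => g |a - c|) + ∑ l, pathEntryCost g a b r (𝒞 l) ≤
      TcolD S hS g a 𝒞 + TrowD S hS 𝒞 b := by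
  have hrow : -∑ l, |r - 𝒞 l| ≤ S.sup' hS fun r => -∑ l, |r - 𝒞 l| :=
    le_sup' (fun r => -∑ l, |r - 𝒞 l|) hr
  simp only [TcolD_add_TrowD_eq, pathEntryCost, sum_sub_distrib, sum_add_distrib,
    sum_neg_distrib]
  linarith

lemma TcolD_add_TrowD_eq_of_sup'_eq {r : ℝ}
    (hr : (S.sup' hS fun r => -∑ l, |r - 𝒞 l|) = -∑ l, |r - 𝒞 l|) :
    TcolD S hS g a 𝒞 + TrowD S hS 𝒞 b =
      k * (S.sup' hS fun c => g |a - c|) + ∑ l, pathEntryCost g a b r (𝒞 l) := by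
  simp only [TcolD_add_TrowD_eq, hr, pathEntryCost, sum_sub_distrib, sum_add_distrib,
    sum_neg_distrib]
  ring

variable {a b}

lemma exists_bestResponse_mem_Icc (ha : a ∈ S) (hb : b ∈ S) (hab : a ≤ b)
    (h𝒞 : ∀ l, 𝒞 l ∈ Set.Icc a b) :
    ∃ r ∈ S, r ∈ Set.Icc a b ∧
      (S.sup' hS fun r => -∑ l, |r - 𝒞 l|) = -∑ l, |r - 𝒞 l| := by
  obtain ⟨r₀, hr₀S, hr₀⟩ := S.exists_mem_eq_sup' hS fun r => -∑ l, |r - 𝒞 l|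
  have hcloser : ∑ l, |clamp a b r₀ - 𝒞 l| ≤ ∑ l, |r₀ - 𝒞 l| :=
    sum_le_sum fun l _ => abs_clamp_sub_le (h𝒞 l) r₀
  refine ⟨clamp a b r₀, clamp_mem ha hb hr₀S, clamp_mem_Icc hab r₀, le_antisymm ?_ ?_⟩
  · rw [hr₀]; linarith
  · exact le_sup' (fun r => -∑ l, |r - 𝒞 l|) (clamp_mem ha hb hr₀S)

lemma pathCost_clamp_le (hg : AntitoneOn g (Set.Ici 0)) (ha : a ∈ S) (hb : b ∈ S)
    (hab : a ≤ b) :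
    TcolD S hS g a (fun l => clamp a b (𝒞 l)) + TrowD S hS (fun l => clamp a b (𝒞 l)) b ≤
      TcolD S hS g a 𝒞 + TrowD S hS 𝒞 b := by
  obtain ⟨r, hrS, hrIcc, hr⟩ :=
    exists_bestResponse_mem_Icc S hS _ ha hb hab fun l => clamp_mem_Icc hab (𝒞 l)
  rw [TcolD_add_TrowD_eq_of_sup'_eq S hS g a b _ hr]
  calc _ ≤ k * (S.sup' hS fun c => g |a - c|) + ∑ l, pathEntryCost g a b r (𝒞 l) := by
        gcongr with l
        exact pathEntryCost_clamp_le hg hrIcc (𝒞 l)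
    _ ≤ _ := add_sum_pathEntryCost_le_of_mem S hS g a b 𝒞 hrS

end PathCost

theorem single_peaked_optimal_profile_between_endpoints_general
    (S : Finset ℝ) (hS : S.Nonempty) (k : ℕ)
    (g : ℝ → ℝ) (hg : AntitoneOn g (Set.Ici 0))
    (ri rj : ℝ) (hri : ri ∈ S) (hrj : rj ∈ S) (hij : ri < rj) :
    (∃ 𝒞 : Fin k → ℝ, (∀ l, 𝒞 l ∈ S) ∧ (∀ l, ri ≤ 𝒞 l ∧ 𝒞 l ≤ rj) ∧
      ∀ 𝒞' : Fin k → ℝ, (∀ l, 𝒞' l ∈ S) →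
        TcolD S hS g ri 𝒞 + TrowD S hS 𝒞 rj ≤ TcolD S hS g ri 𝒞' + TrowD S hS 𝒞' rj) ∧
    (∀ 𝒞 : Fin k → ℝ, (∀ l, 𝒞 l ∈ S) →
      TcolD S hS g ri (fun l => if 𝒞 l < ri then ri else if rj < 𝒞 l then rj else 𝒞 l)
          + TrowD S hS (fun l => if 𝒞 l < ri then ri else if rj < 𝒞 l then rj else 𝒞 l) rj ≤
        TcolD S hS g ri 𝒞 + TrowD S hS 𝒞 rj) := by
  have hclamp := fun 𝒞 : Fin k → ℝ => pathCost_clamp_le S hS g 𝒞 hg hri hrj hij.le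
  refine ⟨?_, fun 𝒞 _ => hclamp 𝒞⟩
  obtain ⟨𝒞₀, h𝒞₀S, h𝒞₀min⟩ := (Fintype.piFinset fun _ : Fin k => S).exists_min_image
    (fun 𝒞 => TcolD S hS g ri 𝒞 + TrowD S hS 𝒞 rj) hS.piFinset_const
  refine ⟨fun l => clamp ri rj (𝒞₀ l), fun l => clamp_mem hri hrj (Fintype.mem_piFinset.1 h𝒞₀S l),
    fun l => clamp_mem_Icc hij.le (𝒞₀ l), fun 𝒞' h𝒞' => ?_⟩
  exact (hclamp 𝒞₀).trans (h𝒞₀min 𝒞' (Fintype.mem_piFinset.2 h𝒞'))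

/-- One-dimensional facility setting (row payoff `−|r−c|`, column payoff `g(|r−c|)`, `g`
antitone on `[0,∞)` with `g 0 = 0`): for `r^i < r^j` in `S`, some column profile with all
entries in `[r^i, r^j]` minimizes the length-2 alternating path cost
`T_{r^i}(𝒞) + T_𝒞(r^j)`; concretely, clamping the entries of any profile into `[r^i, r^j]`
does not increase that cost. -/
theorem single_peaked_optimal_profile_between_endpoints
    (S : Finset ℝ) (hS : S.Nonempty) (k : ℕ)
    (g : ℝ → ℝ) (hg : AntitoneOn g (Set.Ici 0)) (hg0 : g 0 = 0)
    (ri rj : ℝ) (hri : ri ∈ S) (hrj : rj ∈ S) (hij : ri < rj) :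
    (∃ 𝒞 : Fin k → ℝ, (∀ l, 𝒞 l ∈ S) ∧ (∀ l, ri ≤ 𝒞 l ∧ 𝒞 l ≤ rj) ∧
      ∀ 𝒞' : Fin k → ℝ, (∀ l, 𝒞' l ∈ S) →
        TcolD S hS g ri 𝒞 + TrowD S hS 𝒞 rj ≤ TcolD S hS g ri 𝒞' + TrowD S hS 𝒞' rj) ∧
    (∀ 𝒞 : Fin k → ℝ, (∀ l, 𝒞 l ∈ S) →
      TcolD S hS g ri (fun l => if 𝒞 l < ri then ri else if rj < 𝒞 l then rj else 𝒞 l)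
          + TrowD S hS (fun l => if 𝒞 l < ri then ri else if rj < 𝒞 l then rj else 𝒞 l) rj ≤
        TcolD S hS g ri 𝒞 + TrowD S hS 𝒞 rj) :=
  single_peaked_optimal_profile_between_endpoints_general S hS k g hg ri rj hri hrj hij
end
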